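/- arXiv:2206.11225 — 6 statements merged into one kernel-verified Lean document; each statement's English description precedes it below -/
import Mathlib

section
/- Let h : ℝ^d → ℝ^k be any map, let P and N be nonempty finite subsets of ℝ^d, and let x, δ ∈ ℝ^d. If the minimum margin satisfies d(x;h) > 0 and ‖h(x) − h(x+δ)‖₂ < d(x;h)/2, then d(x+δ;h) > 0 (i.e., the 1-NN retrieval score of x+δ is also 1). -/
open MeasureTheory ProbabilityTheory

/-- Minimum margin of `x` w.r.t. embedding `h`, positive reference set `P` and
negative reference set `N`. -/
noncomputable def margin {d k : ℕ}
    (h : EuclideanSpace ℝ (Fin d) → EuclideanSpace ℝ (Fin k))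
    (P N : Finset (EuclideanSpace ℝ (Fin d))) (hP : P.Nonempty) (hN : N.Nonempty)
    (x : EuclideanSpace ℝ (Fin d)) : ℝ :=
  N.inf' hN (fun y => ‖h x - h y‖) - P.inf' hP (fun y => ‖h x - h y‖)

/-- if the minimum margin of `x` is positive and the embedding of `x+δ` stays
within half the margin of the embedding of `x`, then the minimum margin of `x+δ` is positive. -/
theorem retrieval_score_invariant {d k : ℕ}
    (h : EuclideanSpace ℝ (Fin d) → EuclideanSpace ℝ (Fin k))
    (P N : Finset (EuclideanSpace ℝ (Fin d))) (hP : P.Nonempty) (hN : N.Nonempty)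
    (x δ : EuclideanSpace ℝ (Fin d))
    (hd : 0 < margin h P N hP hN x)
    (hδ : ‖h x - h (x + δ)‖ < margin h P N hP hN x / 2) :
    0 < margin h P N hP hN (x + δ) := by
  set ε := ‖h x - h (x + δ)‖ with hε
  have key : ∀ y, |‖h (x + δ) - h y‖ - ‖h x - h y‖| ≤ ε := by
    intro y
    calc |‖h (x + δ) - h y‖ - ‖h x - h y‖| ≤ ‖(h (x + δ) - h y) - (h x - h y)‖ :=
          abs_norm_sub_norm_le _ _
      _ = ε := by rw [hε, ← norm_neg]; congr 1; abel
  have hNle : N.inf' hN (fun y => ‖h x - h y‖) - ε ≤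
      N.inf' hN (fun y => ‖h (x + δ) - h y‖) := by
    apply Finset.le_inf'
    intro y hy
    have h1 := Finset.inf'_le (fun y => ‖h x - h y‖) hy
    have h2 := abs_le.mp (key y)
    linarith [h2.1]
  have hPle : P.inf' hP (fun y => ‖h (x + δ) - h y‖) ≤
      P.inf' hP (fun y => ‖h x - h y‖) + ε := by
    obtain ⟨y, hy, hymin⟩ := P.exists_mem_eq_inf' hP (fun y => ‖h x - h y‖)
    have h1 := Finset.inf'_le (fun y => ‖h (x + δ) - h y‖) hy
    have h2 := abs_le.mp (key y)
    rw [hymin]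
    linarith [h2.2]
  unfold margin at *
  linarith
end

section
/- Let h : ℝ^d → ℝ^k be any map, let P and N be nonempty finite subsets of ℝ^d, let x, δ ∈ ℝ^d with d(x;h) > 0 and ‖h(x) − h(x+δ)‖₂ < d(x;h)/2, and let x⁺ ∈ P be a point achieving min_{x₁∈P} ‖h(x) − h(x₁)‖₂. Then for every y ∈ N, ‖h(x+δ) − h(x⁺)‖₂ < ‖h(x+δ) − h(y)‖₂. -/
open MeasureTheory ProbabilityTheory

/-- under the half-margin condition, the nearest positive point `x⁺` of `x`
is strictly closer to `h (x+δ)` than every negative reference point. -/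
theorem nearest_positive_beats_negatives {d k : ℕ}
    (h : EuclideanSpace ℝ (Fin d) → EuclideanSpace ℝ (Fin k))
    (P N : Finset (EuclideanSpace ℝ (Fin d))) (hP : P.Nonempty) (hN : N.Nonempty)
    (x δ : EuclideanSpace ℝ (Fin d))
    (hd : 0 < margin h P N hP hN x)
    (hδ : ‖h x - h (x + δ)‖ < margin h P N hP hN x / 2)
    (xp : EuclideanSpace ℝ (Fin d)) (hxp : xp ∈ P)
    (hmin : ‖h x - h xp‖ = P.inf' hP (fun y => ‖h x - h y‖)) :
    ∀ y ∈ N, ‖h (x + δ) - h xp‖ < ‖h (x + δ) - h y‖ := by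
  intro y hy
  have hNy : N.inf' hN (fun y => ‖h x - h y‖) ≤ ‖h x - h y‖ :=
    Finset.inf'_le _ hy
  have hm : margin h P N hP hN x = N.inf' hN (fun y => ‖h x - h y‖) - ‖h x - h xp‖ := by
    rw [margin, hmin]
  have h1 : ‖h (x + δ) - h xp‖ ≤ ‖h (x + δ) - h x‖ + ‖h x - h xp‖ :=
    norm_sub_le_norm_sub_add_norm_sub _ _ _
  have h2 : ‖h x - h y‖ ≤ ‖h x - h (x + δ)‖ + ‖h (x + δ) - h y‖ :=
    norm_sub_le_norm_sub_add_norm_sub _ _ _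
  have h3 : ‖h (x + δ) - h x‖ = ‖h x - h (x + δ)‖ := norm_sub_rev _ _
  nlinarith [hδ, hd, h1, h2, h3, hNy, hm]
end

section
/- Let h : ℝ^d → ℝ^k be L-Lipschitz with respect to the ℓ₂ norms (L > 0), let P and N be nonempty finite subsets of ℝ^d, and let x ∈ ℝ^d with d(x;h) > 0. Then for every perturbation δ ∈ ℝ^d with ‖δ‖₂ < d(x;h)/(2L), one has d(x+δ;h) > 0. -/
open MeasureTheory ProbabilityTheory

/-- an `L`-Lipschitz embedding is certifiably robust with radius `d(x;h)/(2L)`. -/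
theorem lipschitz_certified_radius {d k : ℕ}
    (h : EuclideanSpace ℝ (Fin d) → EuclideanSpace ℝ (Fin k))
    (L : ℝ) (hL : 0 < L) (hLip : ∀ x y, ‖h x - h y‖ ≤ L * ‖x - y‖)
    (P N : Finset (EuclideanSpace ℝ (Fin d))) (hP : P.Nonempty) (hN : N.Nonempty)
    (x : EuclideanSpace ℝ (Fin d)) (hd : 0 < margin h P N hP hN x) :
    ∀ δ : EuclideanSpace ℝ (Fin d), ‖δ‖ < margin h P N hP hN x / (2 * L) →
      0 < margin h P N hP hN (x + δ) := by
  intro δ hδ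
  set m := margin h P N hP hN x with hm
  have hε : ‖h (x + δ) - h x‖ < m / 2 := by
    calc ‖h (x + δ) - h x‖ ≤ L * ‖x + δ - x‖ := hLip _ _
      _ = L * ‖δ‖ := by congr 1; simp
      _ < L * (m / (2 * L)) := by
          exact mul_lt_mul_of_pos_left hδ hL
      _ = m / 2 := by field_simp
  -- shift bounds for each point
  have key : ∀ y : EuclideanSpace ℝ (Fin d),
      |‖h (x + δ) - h y‖ - ‖h x - h y‖| < m / 2 := by
    intro y
    have := abs_norm_sub_norm_le (h (x + δ) - h y) (h x - h y)
    have heq : h (x + δ) - h y - (h x - h y) = h (x + δ) - h x := by abel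
    rw [heq] at this
    exact lt_of_le_of_lt this hε
  have hNbound : N.inf' hN (fun y => ‖h x - h y‖) - m / 2
      < N.inf' hN (fun y => ‖h (x + δ) - h y‖) := by
    obtain ⟨y, hy, hy2⟩ := N.exists_mem_eq_inf' hN (fun y => ‖h (x + δ) - h y‖)
    have h1 := Finset.inf'_le (fun y => ‖h x - h y‖) hy
    have := abs_lt.mp (key y)
    rw [hy2]
    linarith [this.1]
  have hPbound : P.inf' hP (fun y => ‖h (x + δ) - h y‖)
      ≤ P.inf' hP (fun y => ‖h x - h y‖) + m / 2 := by
    obtain ⟨y, hy, hy2⟩ := P.exists_mem_eq_inf' hP (fun y => ‖h x - h y‖)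
    have h1 := Finset.inf'_le (fun y => ‖h (x + δ) - h y‖) hy
    have h2 := key y
    have := abs_lt.mp h2
    rw [hy2]
    linarith [this.2]
  have hmdef : m = N.inf' hN (fun y => ‖h x - h y‖) - P.inf' hP (fun y => ‖h x - h y‖) := rfl
  have : margin h P N hP hN (x + δ)
      = N.inf' hN (fun y => ‖h (x + δ) - h y‖) - P.inf' hP (fun y => ‖h (x + δ) - h y‖) := rfl
  rw [this]
  linarith
end

section
/- Let h : ℝ^d → ℝ^k be measurable with ‖h(z)‖₂ ≤ F for all z ∈ ℝ^d, let σ > 0, and let g be the smoothed embedding g(x) = E_{z∼N(0,σ²I_d)}[h(x+z)]. Then for all x, y ∈ ℝ^d: ‖g(x) − g(y)‖₂ ≤ 2F·(Φ(‖x−y‖₂/(2σ)) − Φ(−‖x−y‖₂/(2σ))). -/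
open MeasureTheory ProbabilityTheory

/-- The centered Gaussian measure `N(0, σ² I_d)` on `ℝ^d`, the `d`-fold product of `N(0, σ²)`. -/
noncomputable def gaussPi (d : ℕ) (σ : ℝ) : Measure (EuclideanSpace ℝ (Fin d)) :=
  (Measure.pi fun _ : Fin d => gaussianReal 0 (Real.toNNReal (σ ^ 2))).map
    (EuclideanSpace.equiv (Fin d) ℝ).symm
/-- The standard normal cumulative distribution function. -/
noncomputable def Phi (x : ℝ) : ℝ :=
  (Real.sqrt (2 * Real.pi))⁻¹ * ∫ t in Set.Iic x, Real.exp (-t ^ 2 / 2)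

open Real
open scoped RealInnerProductSpace

/-!
Rescaling by `σ` and recentring at the midpoint of `x` and `y` reduces the bound to comparing
the standard Gaussian `γ` translated by `v` and by `-v`, where `‖v‖ = ‖x - y‖ / (2σ)`. Both
translates have densities `ρ (· ∓ v)` with respect to Lebesgue measure, so the difference of the
two integrals of `h` is at most `F ∫ |ρ (z - v) - ρ (z + v)| dz`. As `ρ` is radially decreasing,
the two densities are ordered on either side of the hyperplane `⟪v, z⟫ = 0`, and the `L¹` distance
is twice the difference of the masses the two translates give to the halfspace `0 ≤ ⟪v, z⟫`.
Since `⟪u, ·⟫` is standard normal under `γ` for a unit vector `u`, these masses are `Φ ‖v‖` and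
`Φ (-‖v‖)`. The density of `γ` is identified through its characteristic function.
-/

section DensityDifference

variable {α W : Type*} [MeasurableSpace α] {μ : Measure α} [NormedAddCommGroup W]
  [NormedSpace ℝ W] {p q : α → ℝ}

theorem norm_integral_smul_sub_integral_smul_le (hp : Integrable p μ) (hq : Integrable q μ)
    {f : α → W} (hf : AEStronglyMeasurable f μ) {F : ℝ} (hF : ∀ x, ‖f x‖ ≤ F) :
    ‖∫ x, p x • f x ∂μ - ∫ x, q x • f x ∂μ‖ ≤ F * ∫ x, |p x - q x| ∂μ := by
  have hfF : ∀ᵐ x ∂μ, ‖f x‖ ≤ F := ae_of_all _ hF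
  have hpf : Integrable (fun x => p x • f x) μ := hp.smul_bdd F hf hfF
  have hqf : Integrable (fun x => q x • f x) μ := hq.smul_bdd F hf hfF
  rw [← integral_sub hpf hqf, ← integral_const_mul]
  refine norm_integral_le_of_norm_le ((hp.sub hq).abs.const_mul F) (ae_of_all _ fun x => ?_)
  rw [← sub_smul, norm_smul, Real.norm_eq_abs, mul_comm]
  exact mul_le_mul_of_nonneg_right (hF x) (abs_nonneg _)

theorem integral_abs_sub_eq_two_mul_setIntegral_sub (hp : Integrable p μ)
    (hq : Integrable q μ) (hpq : ∫ x, p x ∂μ = ∫ x, q x ∂μ) {A : Set α} (hA : MeasurableSet A)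
    (hqp_on : ∀ x ∈ A, q x ≤ p x) (hpq_off : ∀ x ∉ A, p x ≤ q x) :
    ∫ x, |p x - q x| ∂μ = 2 * (∫ x in A, p x ∂μ - ∫ x in A, q x ∂μ) := by
  have h_on : ∫ x in A, |p x - q x| ∂μ = ∫ x in A, p x ∂μ - ∫ x in A, q x ∂μ := by
    rw [← integral_sub hp.integrableOn hq.integrableOn]
    exact setIntegral_congr_fun hA fun x hx => abs_of_nonneg (sub_nonneg.2 (hqp_on x hx))
  have h_off : ∫ x in Aᶜ, |p x - q x| ∂μ = ∫ x in Aᶜ, q x ∂μ - ∫ x in Aᶜ, p x ∂μ := by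
    rw [← integral_sub hq.integrableOn hp.integrableOn]
    exact setIntegral_congr_fun hA.compl fun x hx => by
      rw [abs_of_nonpos (sub_nonpos.2 (hpq_off x hx)), neg_sub]
  have hd : Integrable (fun x => |p x - q x|) μ := (hp.sub hq).abs
  rw [← integral_add_compl hA hd, h_on, h_off]
  linarith [integral_add_compl hA hp, integral_add_compl hA hq]

end DensityDifference

theorem norm_sub_le_norm_add_iff_inner_nonneg {E : Type*} [NormedAddCommGroup E]
    [InnerProductSpace ℝ E] (v z : E) : ‖z - v‖ ≤ ‖z + v‖ ↔ 0 ≤ ⟪v, z⟫ := by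
  rw [← sq_le_sq₀ (norm_nonneg _) (norm_nonneg _), norm_sub_sq_real, norm_add_sq_real,
    real_inner_comm]
  constructor <;> intro <;> linarith

theorem gaussianReal_zero_one_real_Iic (t : ℝ) :
    (gaussianReal 0 1).real (Set.Iic t) = Phi t := by
  rw [measureReal_def, gaussianReal_apply_eq_integral 0 one_ne_zero, ENNReal.toReal_ofReal
    (setIntegral_nonneg measurableSet_Iic fun _ _ => gaussianPDFReal_nonneg _ _ _), Phi,
    ← integral_const_mul]
  simp [gaussianPDFReal]

theorem gaussianReal_zero_one_map_const_mul (σ : ℝ) :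
    (gaussianReal 0 1).map (σ * ·) = gaussianReal 0 (σ ^ 2).toNNReal := by
  rw [gaussianReal_map_const_mul, mul_zero, mul_one, Real.toNNReal_of_nonneg (sq_nonneg σ)]

section StdGaussian

variable {V : Type*} [NormedAddCommGroup V] [InnerProductSpace ℝ V]

variable (V) in
noncomputable def stdGaussianPDFReal (z : V) : ℝ :=
  (√(2 * π))⁻¹ ^ Module.finrank ℝ V * rexp (-‖z‖ ^ 2 / 2)

theorem stdGaussianPDFReal_nonneg (z : V) : 0 ≤ stdGaussianPDFReal V z := by
  unfold stdGaussianPDFReal; positivity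

@[fun_prop]
theorem continuous_stdGaussianPDFReal : Continuous (stdGaussianPDFReal V) := by
  unfold stdGaussianPDFReal; fun_prop

theorem stdGaussianPDFReal_le_of_norm_le {z w : V} (h : ‖z‖ ≤ ‖w‖) :
    stdGaussianPDFReal V w ≤ stdGaussianPDFReal V z := by
  unfold stdGaussianPDFReal
  gcongr

variable [FiniteDimensional ℝ V] [MeasurableSpace V] [BorelSpace V]

theorem integrable_stdGaussianPDFReal : Integrable (stdGaussianPDFReal V) := by
  have h : Integrable fun z : V => rexp (-(1 / 2) * ‖z‖ ^ 2) := by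
    refine Integrable.of_integral_ne_zero ?_
    rw [GaussianFourier.integral_rexp_neg_mul_sq_norm (by norm_num)]
    positivity
  refine (h.const_mul ((√(2 * π))⁻¹ ^ Module.finrank ℝ V)).congr (ae_of_all _ fun z => ?_)
  simp only [stdGaussianPDFReal]
  ring_nf

theorem stdGaussian_eq_withDensity :
    stdGaussian V = volume.withDensity (fun z => ENNReal.ofReal (stdGaussianPDFReal V z)) := by
  have : IsFiniteMeasure (volume.withDensity
      (fun z => ENNReal.ofReal (stdGaussianPDFReal V z))) :=
    isFiniteMeasure_withDensity_ofReal integrable_stdGaussianPDFReal.hasFiniteIntegral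
  have hnorm : ((√(2 * π))⁻¹ ^ Module.finrank ℝ V : ℂ) *
      (π / (1 / 2) : ℂ) ^ (Module.finrank ℝ V / 2 : ℂ) = 1 := by
    set n := Module.finrank ℝ V
    have h2π : (π / (1 / 2) : ℂ) = ((2 * π : ℝ) : ℂ) := by push_cast; ring
    have hsqrt : (2 * π) ^ (n / 2 : ℝ) = √(2 * π) ^ n := by
      rw [Real.sqrt_eq_rpow, ← Real.rpow_natCast, ← Real.rpow_mul (by positivity)]
      ring_nf
    rw [h2π, show (n / 2 : ℂ) = ((n / 2 : ℝ) : ℂ) by push_cast; rfl,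
      ← Complex.ofReal_cpow (by positivity), hsqrt]
    push_cast
    rw [inv_pow, inv_mul_cancel₀ (pow_ne_zero _ (Complex.ofReal_ne_zero.2 (by positivity)))]
  have hintegrand : ∀ t x : V, (ENNReal.ofReal (stdGaussianPDFReal V x)).toReal •
      Complex.exp (⟪x, t⟫ * Complex.I) = ((√(2 * π))⁻¹ ^ Module.finrank ℝ V : ℂ) *
        Complex.exp (-(1 / 2 : ℂ) * ‖x‖ ^ 2 + Complex.I * ⟪t, x⟫) := by
    intro t x
    rw [ENNReal.toReal_ofReal (stdGaussianPDFReal_nonneg x), Complex.real_smul,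
      stdGaussianPDFReal, real_inner_comm]
    push_cast
    rw [mul_assoc, ← Complex.exp_add]
    ring_nf
  refine Measure.ext_of_charFun (funext fun t => ?_)
  rw [charFun_stdGaussian, charFun_apply, integral_withDensity_eq_integral_toReal_smul
    (by fun_prop) (ae_of_all _ fun _ => ENNReal.ofReal_lt_top)]
  simp_rw [hintegrand t]
  rw [integral_const_mul, GaussianFourier.integral_cexp_neg_mul_sq_norm_add (by norm_num),
    ← mul_assoc, hnorm, one_mul, Complex.I_sq]
  ring_nf

theorem integral_stdGaussian_comp_add {W : Type*} [NormedAddCommGroup W] [NormedSpace ℝ W]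
    (f : V → W) (a : V) :
    ∫ z, f (a + z) ∂stdGaussian V = ∫ z, stdGaussianPDFReal V (z - a) • f z := by
  rw [stdGaussian_eq_withDensity, integral_withDensity_eq_integral_toReal_smul (by fun_prop)
    (ae_of_all _ fun _ => ENNReal.ofReal_lt_top), ← integral_sub_right_eq_self _ a]
  simp [ENNReal.toReal_ofReal (stdGaussianPDFReal_nonneg _)]

theorem stdGaussian_real_preimage_add (a : V) {S : Set V} (hS : MeasurableSet S) :
    (stdGaussian V).real ((a + ·) ⁻¹' S) = ∫ z in S, stdGaussianPDFReal V (z - a) := by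
  calc (stdGaussian V).real ((a + ·) ⁻¹' S)
      = ∫ z, S.indicator (fun _ => (1 : ℝ)) (a + z) ∂stdGaussian V := by
        rw [← integral_indicator_one (hS.preimage (measurable_const_add a))]
        rfl
    _ = ∫ z, stdGaussianPDFReal V (z - a) • S.indicator (fun _ => (1 : ℝ)) z :=
        integral_stdGaussian_comp_add _ a
    _ = ∫ z in S, stdGaussianPDFReal V (z - a) := by
        rw [← integral_indicator hS]
        congr 1 with z
        by_cases hz : z ∈ S <;> simp [hz]

theorem stdGaussian_map_inner {u : V} (hu : ‖u‖ = 1) :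
    (stdGaussian V).map (fun w => ⟪u, w⟫) = gaussianReal 0 1 := by
  have h := IsGaussian.map_eq_gaussianReal (μ := stdGaussian V) (innerSL ℝ u)
  rw [integral_strongDual_stdGaussian, variance_dual_stdGaussian, innerSL_apply_norm, hu] at h
  simpa using h

theorem stdGaussian_real_inner_le {v : V} (hv : v ≠ 0) (t : ℝ) :
    (stdGaussian V).real {w | ⟪v, w⟫ ≤ t} = Phi (t / ‖v‖) := by
  have hnv : 0 < ‖v‖ := norm_pos_iff.2 hv
  have hu : ‖‖v‖⁻¹ • v‖ = 1 := by rw [norm_smul, norm_inv, norm_norm, inv_mul_cancel₀ hnv.ne']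
  have hset : {w | ⟪v, w⟫ ≤ t} = (fun w => ⟪‖v‖⁻¹ • v, w⟫) ⁻¹' Set.Iic (t / ‖v‖) := by
    ext w
    rw [Set.mem_preimage, Set.mem_Iic, real_inner_smul_left, inv_mul_eq_div,
      div_le_div_iff_of_pos_right hnv]
    rfl
  rw [hset, ← map_measureReal_apply (by fun_prop) measurableSet_Iic, stdGaussian_map_inner hu,
    gaussianReal_zero_one_real_Iic]

theorem stdGaussian_real_inner_add_nonneg {v : V} (hv : v ≠ 0) (a : V) :
    (stdGaussian V).real {w | 0 ≤ ⟪v, a + w⟫} = Phi (⟪v, a⟫ / ‖v‖) := by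
  have hset : {w | 0 ≤ ⟪v, a + w⟫} = {w | ⟪-v, w⟫ ≤ ⟪v, a⟫} := by
    ext w
    simp [inner_add_right, neg_le_iff_add_nonneg]
  rw [hset, stdGaussian_real_inner_le (neg_ne_zero.2 hv), norm_neg]

theorem norm_integral_stdGaussian_add_sub_le {W : Type*} [NormedAddCommGroup W]
    [NormedSpace ℝ W] {f : V → W} (hf : StronglyMeasurable f) {F : ℝ} (hF : ∀ z, ‖f z‖ ≤ F)
    (v : V) :
    ‖∫ z, f (v + z) ∂stdGaussian V - ∫ z, f (-v + z) ∂stdGaussian V‖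
      ≤ 2 * F * (Phi ‖v‖ - Phi (-‖v‖)) := by
  rcases eq_or_ne v 0 with rfl | hv
  · simp
  have hnv : ‖v‖ ≠ 0 := norm_ne_zero_iff.2 hv
  set p := fun z => stdGaussianPDFReal V (z - v)
  set q := fun z => stdGaussianPDFReal V (z - -v)
  have hp : Integrable p := integrable_stdGaussianPDFReal.comp_sub_right v
  have hq : Integrable q := integrable_stdGaussianPDFReal.comp_sub_right (-v)
  set A := {z : V | 0 ≤ ⟪v, z⟫}
  have hA : MeasurableSet A := measurableSet_le measurable_const (by fun_prop)
  have hpq : ∫ z, p z = ∫ z, q z := by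
    rw [← setIntegral_univ, ← stdGaussian_real_preimage_add v MeasurableSet.univ,
      ← setIntegral_univ, ← stdGaussian_real_preimage_add (-v) MeasurableSet.univ]
    simp
  have hqp_on : ∀ z ∈ A, q z ≤ p z := fun z hz => stdGaussianPDFReal_le_of_norm_le <| by
    simpa using (norm_sub_le_norm_add_iff_inner_nonneg v z).2 hz
  have hpq_off : ∀ z ∉ A, p z ≤ q z := fun z hz => stdGaussianPDFReal_le_of_norm_le <| by
    simpa using (not_le.1 (mt (norm_sub_le_norm_add_iff_inner_nonneg v z).1 hz)).le
  have hpA : ∫ z in A, p z = Phi ‖v‖ := by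
    rw [← stdGaussian_real_preimage_add v hA]
    refine (stdGaussian_real_inner_add_nonneg hv v).trans ?_
    rw [real_inner_self_eq_norm_sq, sq, mul_div_cancel_right₀ _ hnv]
  have hqA : ∫ z in A, q z = Phi (-‖v‖) := by
    rw [← stdGaussian_real_preimage_add (-v) hA]
    refine (stdGaussian_real_inner_add_nonneg hv (-v)).trans ?_
    rw [inner_neg_right, real_inner_self_eq_norm_sq, sq, neg_div, mul_div_cancel_right₀ _ hnv]
  rw [integral_stdGaussian_comp_add, integral_stdGaussian_comp_add]
  calc _ ≤ F * ∫ z, |p z - q z| :=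
        norm_integral_smul_sub_integral_smul_le hp hq hf.aestronglyMeasurable hF
    _ = 2 * F * (Phi ‖v‖ - Phi (-‖v‖)) := by
        rw [integral_abs_sub_eq_two_mul_setIntegral_sub hp hq hpq hA hqp_on hpq_off, hpA, hqA]
        ring

end StdGaussian

theorem gaussPi_eq_map_smul_stdGaussian (d : ℕ) (σ : ℝ) :
    gaussPi d σ = (stdGaussian (EuclideanSpace ℝ (Fin d))).map (σ • ·) := by
  rw [gaussPi, ← funext fun _ => gaussianReal_zero_one_map_const_mul σ,
    ← Measure.pi_map_pi (fun _ => by fun_prop), Measure.map_map (by fun_prop) (by fun_prop),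
    ← map_pi_eq_stdGaussian, Measure.map_map (by fun_prop) (by fun_prop)]
  rfl

theorem integral_gaussPi_comp_add {d : ℕ} {σ : ℝ} (hσ : σ ≠ 0) {W : Type*}
    [NormedAddCommGroup W] [NormedSpace ℝ W] (f : EuclideanSpace ℝ (Fin d) → W)
    (x : EuclideanSpace ℝ (Fin d)) :
    ∫ z, f (x + z) ∂gaussPi d σ = ∫ z, f (x + σ • z) ∂stdGaussian _ := by
  rw [gaussPi_eq_map_smul_stdGaussian]
  exact (Homeomorph.smulOfNeZero σ hσ).measurableEmbedding.integral_map _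

/-- the Gaussian-smoothed embedding satisfies
`‖g x − g y‖ ≤ 2F (Φ(‖x−y‖/(2σ)) − Φ(−‖x−y‖/(2σ)))`. -/
theorem smoothed_embedding_bound {d k : ℕ}
    (h : EuclideanSpace ℝ (Fin d) → EuclideanSpace ℝ (Fin k)) (hmeas : Measurable h)
    (F σ : ℝ) (hF : ∀ z, ‖h z‖ ≤ F) (hσ : 0 < σ)
    (g : EuclideanSpace ℝ (Fin d) → EuclideanSpace ℝ (Fin k))
    (hg : ∀ x, g x = ∫ z, h (x + z) ∂(gaussPi d σ)) :
    ∀ x y : EuclideanSpace ℝ (Fin d),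
      ‖g x - g y‖ ≤ 2 * F * (Phi (‖x - y‖ / (2 * σ)) - Phi (-‖x - y‖ / (2 * σ))) := by
  intro x y
  set m := (2 : ℝ)⁻¹ • (x + y)
  set v := (2 * σ)⁻¹ • (x - y)
  have hσv : σ • v = (2 : ℝ)⁻¹ • (x - y) := by
    rw [smul_smul, mul_inv_rev, ← mul_assoc, mul_inv_cancel₀ hσ.ne', one_mul]
  have hgx : g x = ∫ z, h (m + σ • (v + z)) ∂stdGaussian _ := by
    rw [hg, integral_gaussPi_comp_add hσ.ne']
    refine integral_congr_ae (ae_of_all _ fun z => congrArg h ?_)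
    rw [smul_add, hσv]
    module
  have hgy : g y = ∫ z, h (m + σ • (-v + z)) ∂stdGaussian _ := by
    rw [hg, integral_gaussPi_comp_add hσ.ne']
    refine integral_congr_ae (ae_of_all _ fun z => congrArg h ?_)
    rw [smul_add, smul_neg, hσv]
    module
  have hv : ‖v‖ = ‖x - y‖ / (2 * σ) := by
    rw [norm_smul, Real.norm_of_nonneg (by positivity), inv_mul_eq_div]
  have hf : StronglyMeasurable fun w => h (m + σ • w) :=
    (hmeas.comp ((measurable_const_add m).comp (measurable_const_smul σ))).stronglyMeasurable
  rw [hgx, hgy, neg_div, ← hv]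
  exact norm_integral_stdGaussian_add_sub_le hf (fun _ => hF _) v
end

section
/- Let F > 0, σ > 0, and define h : ℝ → ℝ by h(x) = F·sign(x). Then the smoothed map g(x) = E_{z∼N(0,σ²)}[h(x+z)] satisfies g(x) = F·(Φ(x/σ) − Φ(−x/σ)) for all x, and consequently for every x > 0, |g(x) − g(−x)| = 2F·(Φ(|x−(−x)|/(2σ)) − Φ(−|x−(−x)|/(2σ))), i.e., the smoothing bound ‖g(x)−g(y)‖ ≤ 2F(Φ(‖x−y‖/(2σ)) − Φ(−‖x−y‖/(2σ))) is attained with equality. -/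
open MeasureTheory ProbabilityTheory

lemma pdf_scaled {σ : ℝ} (hσ : 0 < σ) (t : ℝ) :
    gaussianPDFReal 0 (Real.toNNReal (σ ^ 2)) (σ * t)
      = σ⁻¹ * ((Real.sqrt (2 * Real.pi))⁻¹ * Real.exp (-t ^ 2 / 2)) := by
  have hv : ((Real.toNNReal (σ ^ 2)) : ℝ) = σ ^ 2 := Real.coe_toNNReal _ (sq_nonneg σ)
  unfold gaussianPDFReal
  rw [hv]
  have h1 : Real.sqrt (2 * Real.pi * σ ^ 2) = Real.sqrt (2 * Real.pi) * σ := by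
    rw [Real.sqrt_mul (by positivity), Real.sqrt_sq hσ.le]
  have h2 : -(σ * t - 0) ^ 2 / (2 * σ ^ 2) = -t ^ 2 / 2 := by
    field_simp; ring
  rw [h1, h2, mul_inv]
  ring

lemma Ioi_pdf {σ : ℝ} (hσ : 0 < σ) (a : ℝ) :
    ∫ z in Set.Ioi a, gaussianPDFReal 0 (Real.toNNReal (σ ^ 2)) z = Phi (-a / σ) := by
  have key : ∫ x in Set.Ioi (a / σ),
      gaussianPDFReal 0 (Real.toNNReal (σ ^ 2)) (σ * x)
      = σ⁻¹ • ∫ z in Set.Ioi (σ * (a / σ)), gaussianPDFReal 0 (Real.toNNReal (σ ^ 2)) z :=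
    MeasureTheory.integral_comp_mul_left_Ioi _ _ hσ
  rw [mul_div_cancel₀ _ hσ.ne'] at key
  have : ∫ z in Set.Ioi a, gaussianPDFReal 0 (Real.toNNReal (σ ^ 2)) z
      = σ • ∫ x in Set.Ioi (a / σ), gaussianPDFReal 0 (Real.toNNReal (σ ^ 2)) (σ * x) := by
    rw [key, smul_smul, mul_inv_cancel₀ hσ.ne', one_smul]
  rw [this]
  simp only [pdf_scaled hσ]
  rw [MeasureTheory.integral_const_mul, smul_eq_mul, MeasureTheory.integral_const_mul,
    ← mul_assoc, ← mul_assoc, mul_inv_cancel₀ hσ.ne', one_mul]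
  have hneg : ∫ t in Set.Iic (-a / σ), Real.exp (-t ^ 2 / 2)
      = ∫ x in Set.Ioi (a / σ), Real.exp (-x ^ 2 / 2) := by
    rw [show (-a / σ) = -(a / σ) by ring, ← integral_comp_neg_Ioi]
    simp [neg_sq]
  rw [Phi, hneg]

lemma Iic_pdf {σ : ℝ} (hσ : 0 < σ) (a : ℝ) :
    ∫ z in Set.Iic a, gaussianPDFReal 0 (Real.toNNReal (σ ^ 2)) z = Phi (a / σ) := by
  have heven : ∫ z in Set.Ioi (-a), gaussianPDFReal 0 (Real.toNNReal (σ ^ 2)) (-z)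
      = ∫ z in Set.Iic a, gaussianPDFReal 0 (Real.toNNReal (σ ^ 2)) z := by
    rw [integral_comp_neg_Ioi, neg_neg]
  rw [← heven]
  have : ∀ z : ℝ, gaussianPDFReal 0 (Real.toNNReal (σ ^ 2)) (-z)
      = gaussianPDFReal 0 (Real.toNNReal (σ ^ 2)) z := by
    intro z; unfold gaussianPDFReal; ring_nf
  simp only [this]
  rw [Ioi_pdf hσ, neg_neg]

/-- for `h(x) = F·sign(x)` the smoothed map is
`g(x) = F(Φ(x/σ) − Φ(−x/σ))`, and the smoothing bound is attained with equality at `(x, −x)`. -/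
theorem smoothing_bound_tight (F σ : ℝ) (hF : 0 < F) (hσ : 0 < σ)
    (h : ℝ → ℝ) (hh : ∀ x, h x = F * Real.sign x)
    (g : ℝ → ℝ)
    (hg : ∀ x, g x = ∫ z, h (x + z) ∂(gaussianReal 0 (Real.toNNReal (σ ^ 2)))) :
    (∀ x : ℝ, g x = F * (Phi (x / σ) - Phi (-x / σ))) ∧
      ∀ x : ℝ, 0 < x →
        |g x - g (-x)| =
          2 * F * (Phi (|x - (-x)| / (2 * σ)) - Phi (-|x - (-x)| / (2 * σ))) := by
  set v : NNReal := Real.toNNReal (σ ^ 2) with hvdef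
  have hv : v ≠ 0 := by
    simp [hvdef, Real.toNNReal_eq_zero, not_le]
    positivity
  have hint : Integrable (gaussianPDFReal 0 v) := integrable_gaussianPDFReal 0 v
  have hmono : ∀ x : ℝ, 0 < x → 0 ≤ Phi (x / σ) - Phi (-x / σ) := by
    intro x hx
    rw [← Iic_pdf hσ, show (-x / σ) = (-x) / σ by ring, ← Iic_pdf hσ]
    have := MeasureTheory.setIntegral_mono_set (s := Set.Iic (-x)) (t := Set.Iic x)
      (hint.restrict)
      (Filter.Eventually.of_forall (gaussianPDFReal_nonneg 0 v))
      (HasSubset.Subset.eventuallyLE (Set.Iic_subset_Iic.2 (by linarith)))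
    linarith
  have main : ∀ x : ℝ, g x = F * (Phi (x / σ) - Phi (-x / σ)) := by
    intro x
    rw [hg x, gaussianReal_of_var_ne_zero _ hv]
    have hgp : gaussianPDF 0 v = fun z => ((fun z => (gaussianPDFReal 0 v z).toNNReal) z : ENNReal) := rfl
    rw [hgp, integral_withDensity_eq_integral_smul
      ((measurable_gaussianPDFReal 0 v).real_toNNReal) _]
    have hpt : ∀ z : ℝ, ((gaussianPDFReal 0 v z).toNNReal : NNReal) • h (x + z)
        = F * ((Set.Ioi (-x)).indicator (gaussianPDFReal 0 v) z
            - (Set.Iio (-x)).indicator (gaussianPDFReal 0 v) z) := by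
      intro z
      rw [NNReal.smul_def, smul_eq_mul, Real.coe_toNNReal _ (gaussianPDFReal_nonneg 0 v z), hh]
      rcases lt_trichotomy z (-x) with hz | hz | hz
      · rw [Set.indicator_of_notMem (Set.notMem_Ioi.2 hz.le),
          Set.indicator_of_mem (Set.mem_Iio.2 hz)]
        rw [Real.sign_of_neg (by linarith)]
        ring
      · subst hz
        rw [Set.indicator_of_notMem (by simp), Set.indicator_of_notMem (by simp)]
        simp [Real.sign_zero]
      · rw [Set.indicator_of_mem (Set.mem_Ioi.2 hz), Set.indicator_of_notMem (Set.notMem_Iio.2 hz.le)]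
        rw [Real.sign_of_pos (by linarith)]
        ring
    rw [MeasureTheory.integral_congr_ae (Filter.Eventually.of_forall hpt)]
    rw [MeasureTheory.integral_const_mul]
    rw [MeasureTheory.integral_sub
      ((hint.indicator measurableSet_Ioi))
      ((hint.indicator measurableSet_Iio))]
    rw [MeasureTheory.integral_indicator measurableSet_Ioi,
      MeasureTheory.integral_indicator measurableSet_Iio]
    have hIio : ∫ z in Set.Iio (-x), gaussianPDFReal 0 v z
        = ∫ z in Set.Iic (-x), gaussianPDFReal 0 v z := by
      rw [← MeasureTheory.integral_Iic_eq_integral_Iio]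
    rw [hIio, Ioi_pdf hσ, Iic_pdf hσ]
    ring_nf
  refine ⟨main, fun x hx => ?_⟩
  have habs : |x - (-x)| = 2 * x := by
    rw [abs_of_pos (by linarith)]; ring
  have h2 : |x - (-x)| / (2 * σ) = x / σ := by
    rw [habs]; field_simp
  have h3 : -|x - (-x)| / (2 * σ) = -x / σ := by
    rw [habs]; field_simp
  rw [h2, h3, main x, main (-x), neg_neg]
  have : F * (Phi (x / σ) - Phi (-x / σ)) - F * (Phi (-x / σ) - Phi (x / σ))
      = 2 * F * (Phi (x / σ) - Phi (-x / σ)) := by ring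
  rw [this, abs_of_nonneg]
  have := hmono x hx
  positivity
end

section
/- Let σ > 0 and let p be the probability density function of the centered Gaussian N(0,σ²I_d) on ℝ^d, p(z) = (2πσ²)^{−d/2} exp(−‖z‖₂²/(2σ²)). Then for every v ∈ ℝ^d, ∫_{ℝ^d} max(p(z) − p(z+v), 0) dz = Φ(‖v‖₂/(2σ)) − Φ(−‖v‖₂/(2σ)). -/
/-!
The integrand depends on `z` only through `‖z‖` and `‖z + v‖`, so the reflection of `ℝ^d` that
maps `v` to `‖v‖ e₀` reduces the problem to a shift along the first coordinate. The density is a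
product of one-dimensional Gaussian densities, the other coordinates integrate to `1`, and in
dimension one, with `c = ‖v‖`, `p t ≥ p (t + c)` exactly when `t ≥ -c/2`, so the integral equals
`P(N(0, σ²) > -c/2) - P(N(0, σ²) > c/2)`.
-/

open MeasureTheory ProbabilityTheory

open Real Set

theorem setIntegral_Ioi_comp_add_right {E : Type*} [NormedAddCommGroup E] [NormedSpace ℝ E]
    (g : ℝ → E) (a c : ℝ) : ∫ x in Ioi a, g (x + c) = ∫ x in Ioi (a + c), g x := by
  rw [← integral_indicator measurableSet_Ioi, ← integral_indicator measurableSet_Ioi,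
    ← integral_add_right_eq_self ((Ioi (a + c)).indicator g) c]
  congr 1 with x
  simp [indicator]

theorem Phi_eq_integral_Ioi (x : ℝ) :
    Phi x = (√(2 * π))⁻¹ * ∫ t in Ioi (-x), exp (-t ^ 2 / 2) := by
  rw [Phi, ← integral_comp_neg_Iic]
  simp only [neg_sq]

noncomputable def gaussianDensity (σ t : ℝ) : ℝ :=
  (2 * π * σ ^ 2) ^ (-(1 : ℝ) / 2) * exp (-t ^ 2 / (2 * σ ^ 2))

section gaussianDensity

variable {σ : ℝ}

theorem gaussianDensity_nonneg (σ t : ℝ) : 0 ≤ gaussianDensity σ t := by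
  unfold gaussianDensity; positivity

theorem gaussianDensity_le_of_sq_le {s t : ℝ} (h : s ^ 2 ≤ t ^ 2) :
    gaussianDensity σ t ≤ gaussianDensity σ s := by
  unfold gaussianDensity
  gcongr

theorem gaussianDensity_eq_mul_exp_neg_mul_sq (σ : ℝ) :
    gaussianDensity σ =
      fun t ↦ (2 * π * σ ^ 2) ^ (-(1 : ℝ) / 2) * exp (-(2 * σ ^ 2)⁻¹ * t ^ 2) := by
  ext t
  rw [gaussianDensity]
  ring_nf

theorem integrable_gaussianDensity (hσ : σ ≠ 0) : Integrable (gaussianDensity σ) := by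
  rw [gaussianDensity_eq_mul_exp_neg_mul_sq]
  exact (integrable_exp_neg_mul_sq (by positivity)).const_mul _

theorem integral_gaussianDensity (hσ : σ ≠ 0) : ∫ t, gaussianDensity σ t = 1 := by
  rw [gaussianDensity_eq_mul_exp_neg_mul_sq, integral_const_mul, integral_gaussian,
    show π / (2 * σ ^ 2)⁻¹ = 2 * π * σ ^ 2 by field_simp, neg_div, rpow_neg (by positivity),
    ← sqrt_eq_rpow, inv_mul_cancel₀ (by positivity)]

theorem integral_Ioi_gaussianDensity (hσ : 0 < σ) (a : ℝ) :
    ∫ t in Ioi a, gaussianDensity σ t = Phi (-a / σ) := by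
  have hscale (t : ℝ) :
      gaussianDensity σ t = (√(2 * π))⁻¹ * (σ⁻¹ * exp (-(σ⁻¹ * t) ^ 2 / 2)) := by
    rw [gaussianDensity, neg_div, rpow_neg (by positivity), ← sqrt_eq_rpow,
      sqrt_mul (by positivity), sqrt_sq hσ.le, mul_inv, mul_assoc]
    congr 3
    ring
  simp_rw [hscale, integral_const_mul]
  rw [integral_comp_mul_left_Ioi (fun t ↦ exp (-t ^ 2 / 2)) a (inv_pos.mpr hσ),
    Phi_eq_integral_Ioi, smul_eq_mul, inv_inv, inv_mul_cancel_left₀ hσ.ne', neg_div, neg_neg,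
    div_eq_inv_mul]

theorem integral_posPart_gaussianDensity_sub_gaussianDensity_add (hσ : 0 < σ) {c : ℝ}
    (hc : 0 ≤ c) :
    ∫ t, max (gaussianDensity σ t - gaussianDensity σ (t + c)) 0 =
      Phi (c / (2 * σ)) - Phi (-c / (2 * σ)) := by
  have hpos : (fun t ↦ max (gaussianDensity σ t - gaussianDensity σ (t + c)) 0) =
      (Ioi (-(c / 2))).indicator fun t ↦ gaussianDensity σ t - gaussianDensity σ (t + c) := by
    ext t
    by_cases ht : -(c / 2) < t
    · rw [indicator_of_mem (mem_Ioi.2 ht), max_eq_left]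
      exact sub_nonneg.2 (gaussianDensity_le_of_sq_le (by nlinarith))
    · rw [indicator_of_notMem (notMem_Ioi.2 (not_lt.1 ht)), max_eq_right]
      exact sub_nonpos.2 (gaussianDensity_le_of_sq_le (by nlinarith))
  have hint := integrable_gaussianDensity hσ.ne'
  rw [hpos, integral_indicator measurableSet_Ioi,
    integral_sub hint.integrableOn (hint.comp_add_right c).integrableOn,
    setIntegral_Ioi_comp_add_right, integral_Ioi_gaussianDensity hσ,
    integral_Ioi_gaussianDensity hσ]
  congr 2 <;> ring

end gaussianDensity

section Rotation

variable {E F : Type*} [NormedAddCommGroup E] [InnerProductSpace ℝ E] [FiniteDimensional ℝ E]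
  [MeasurableSpace E] [BorelSpace E] [NormedAddCommGroup F] [NormedSpace ℝ F]

theorem integral_comp_add_eq_of_norm_eq {f : E → ℝ} (hf : ∀ z z', ‖z‖ = ‖z'‖ → f z = f z')
    (φ : ℝ → ℝ → F) {v w : E} (h : ‖v‖ = ‖w‖) :
    ∫ z, φ (f z) (f (z + v)) = ∫ z, φ (f z) (f (z + w)) := by
  set e := (ℝ ∙ (v - w))ᗮ.reflection
  have hev : e v = w := Submodule.reflection_sub h
  have hfe (z : E) : f (e z) = f z := hf _ _ (e.norm_map z)
  conv_rhs => rw [← e.measurePreserving.integral_comp e.toHomeomorph.measurableEmbedding]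
  simp only [← hev, ← map_add, hfe]

end Rotation

theorem rpow_mul_exp_neg_norm_sq_eq_prod_gaussianDensity {ι : Type*} [Fintype ι] (σ : ℝ)
    (z : EuclideanSpace ℝ ι) :
    (2 * π * σ ^ 2) ^ (-(Fintype.card ι : ℝ) / 2) * exp (-‖z‖ ^ 2 / (2 * σ ^ 2)) =
      ∏ i, gaussianDensity σ (z i) := by
  simp only [gaussianDensity, Finset.prod_mul_distrib, Finset.prod_const, ← exp_sum,
    Finset.card_univ, ← Finset.sum_div, Finset.sum_neg_distrib, EuclideanSpace.norm_sq_eq,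
    Real.norm_eq_abs, sq_abs]
  rw [← rpow_mul_natCast (by positivity)]
  ring_nf

theorem integral_posPart_prod_gaussianDensity_sub_add_single {σ c : ℝ} (hσ : 0 < σ) (hc : 0 ≤ c)
    (n : ℕ) :
    ∫ x : Fin (n + 1) → ℝ, max ((∏ i, gaussianDensity σ (x i)) -
        ∏ i, gaussianDensity σ ((x + Pi.single 0 c : Fin (n + 1) → ℝ) i)) 0 =
      Phi (c / (2 * σ)) - Phi (-c / (2 * σ)) := by
  let F : Fin (n + 1) → ℝ → ℝ :=
    Fin.cons (fun t ↦ max (gaussianDensity σ t - gaussianDensity σ (t + c)) 0)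
      fun _ ↦ gaussianDensity σ
  calc _ = ∫ x : Fin (n + 1) → ℝ, ∏ i, F i (x i) := by
        congr 1 with x
        simp only [F, Fin.prod_univ_succ, Pi.add_apply, Fin.cons_zero, Fin.cons_succ,
          Pi.single_eq_same, Pi.single_eq_of_ne (Fin.succ_ne_zero _), add_zero]
        rw [← sub_mul, max_mul_of_nonneg _ _ (Finset.prod_nonneg fun _ _ ↦
          gaussianDensity_nonneg _ _), zero_mul]
    _ = ∏ i, ∫ t, F i t := integral_fintype_prod_volume_eq_prod F
    _ = _ := by
        simp [F, Fin.prod_univ_succ, integral_gaussianDensity hσ.ne',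
          integral_posPart_gaussianDensity_sub_gaussianDensity_add hσ hc]

/-- for the Gaussian density `p` on `ℝ^d`,
`∫ (p(z) − p(z+v))₊ dz = Φ(‖v‖/(2σ)) − Φ(−‖v‖/(2σ))`. -/
theorem gaussian_positive_part_integral {d : ℕ} (σ : ℝ) (hσ : 0 < σ)
    (p : EuclideanSpace ℝ (Fin d) → ℝ)
    (hp : ∀ z, p z = (2 * Real.pi * σ ^ 2) ^ (-(d : ℝ) / 2) *
      Real.exp (-‖z‖ ^ 2 / (2 * σ ^ 2))) :
    ∀ v : EuclideanSpace ℝ (Fin d),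
      (∫ z, max (p z - p (z + v)) 0) = Phi (‖v‖ / (2 * σ)) - Phi (-‖v‖ / (2 * σ)) := by
  intro v
  cases d with
  | zero => simp [Subsingleton.elim v 0]
  | succ n =>
    let w : EuclideanSpace ℝ (Fin (n + 1)) := EuclideanSpace.single 0 ‖v‖
    have hw : ‖v‖ = ‖w‖ := by simp [w]
    have hp_radial (z z' : EuclideanSpace ℝ (Fin (n + 1))) (h : ‖z‖ = ‖z'‖) : p z = p z' := by
      rw [hp, hp, h]
    have hprod (z : EuclideanSpace ℝ (Fin (n + 1))) : p z = ∏ i, gaussianDensity σ (z i) := by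
      rw [hp, ← rpow_mul_exp_neg_norm_sq_eq_prod_gaussianDensity, Fintype.card_fin]
    calc ∫ z, max (p z - p (z + v)) 0 = ∫ z, max (p z - p (z + w)) 0 :=
          integral_comp_add_eq_of_norm_eq hp_radial (fun a b ↦ max (a - b) 0) hw
      _ = ∫ x : Fin (n + 1) → ℝ, max ((∏ i, gaussianDensity σ (x i)) -
            ∏ i, gaussianDensity σ ((x + Pi.single 0 ‖v‖ : Fin (n + 1) → ℝ) i)) 0 := by
          rw [← (PiLp.volume_preserving_toLp _).integral_comp
            (MeasurableEquiv.toLp 2 _).measurableEmbedding]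
          simp [hprod, w, Pi.single_apply]
      _ = _ := integral_posPart_prod_gaussianDensity_sub_add_single hσ (norm_nonneg v) n
end
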